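/- arXiv:1502.05304 — 4 statements merged into one kernel-verified Lean document; each statement's English description precedes it below -/
import Mathlib

section
/- Let G be a bipartite graph with parts X and Y such that G contains no complete bipartite subgraph K_{s,t} (i.e., for any s vertices in X there are fewer than t vertices in Y adjacent to all of them). Then the number of edges of G is at most t^{1/s}·|X|·|Y|^{1-1/s} + s·|Y| up to a constant factor; concretely, |E(G)| ≤ t^{1/s}·|X|·|Y|^{1-1/s} + s·|Y| holds with explicit constant 1 replaced by a universal constant C. -/
/-!
Write `d y` for the number of neighbours of `y ∈ Y` in `X`. Double counting pairs `(S, y)` with `S`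
an `s`-subset of the neighbourhood of `y`, and using that no `s`-set has `t` common neighbours, gives
`∑ y, (d y + 1 - s) ^ s ≤ s! ∑ y, (d y).choose s ≤ t |X| ^ s` (subtraction in `ℕ`). The power-mean inequality turns this
into `∑ y, (d y + 1 - s) ≤ t ^ (1/s) |X| |Y| ^ (1 - 1/s)`, and `|G| = ∑ y, d y` exceeds the left side
by at most `s |Y|`, so the constant `C = 1` works.
-/

open Finset

variable {α β : Type*}

section SetFamily

variable [DecidableEq α] {X : Finset α} {Y : Finset β} {N : β → Finset α} {s c : ℕ}

theorem Finset.sum_choose_card_le (hN : ∀ y ∈ Y, N y ⊆ X)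
    (hc : ∀ S ∈ X.powersetCard s, #{y ∈ Y | S ⊆ N y} ≤ c) :
    ∑ y ∈ Y, (#(N y)).choose s ≤ c * (#X).choose s := by
  have hfilter : ∀ y ∈ Y, {S ∈ X.powersetCard s | S ⊆ N y} = (N y).powersetCard s := by
    intro y hy
    ext S
    simp only [mem_filter, mem_powersetCard]
    exact ⟨fun h => ⟨h.2, h.1.2⟩, fun h => ⟨⟨h.1.trans (hN y hy), h.2⟩, h.1⟩⟩
  calc ∑ y ∈ Y, (#(N y)).choose s
      = ∑ y ∈ Y, #((X.powersetCard s).bipartiteAbove (fun y S => S ⊆ N y) y) :=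
        sum_congr rfl fun y hy => by
          rw [bipartiteAbove, hfilter y hy, card_powersetCard]
    _ = ∑ S ∈ X.powersetCard s, #{y ∈ Y | S ⊆ N y} :=
        sum_card_bipartiteAbove_eq_sum_card_bipartiteBelow _
    _ ≤ ∑ _S ∈ X.powersetCard s, c := sum_le_sum hc
    _ = c * (#X).choose s := by rw [sum_const, card_powersetCard, smul_eq_mul, mul_comm]

theorem Finset.sum_card_add_one_sub_pow_le (hN : ∀ y ∈ Y, N y ⊆ X)
    (hc : ∀ S ∈ X.powersetCard s, #{y ∈ Y | S ⊆ N y} ≤ c) :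
    ∑ y ∈ Y, (#(N y) + 1 - s) ^ s ≤ c * #X ^ s :=
  calc ∑ y ∈ Y, (#(N y) + 1 - s) ^ s
      ≤ ∑ y ∈ Y, s.factorial * (#(N y)).choose s :=
        sum_le_sum fun y _ => by
          rw [← Nat.descFactorial_eq_factorial_mul_choose]
          exact Nat.pow_sub_le_descFactorial _ _
    _ ≤ s.factorial * (c * (#X).choose s) := by
        rw [← mul_sum]
        exact Nat.mul_le_mul_left _ (sum_choose_card_le hN hc)
    _ = c * (#X).descFactorial s := by
        rw [Nat.descFactorial_eq_factorial_mul_choose]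
        ring
    _ ≤ c * #X ^ s := Nat.mul_le_mul_left _ (Nat.descFactorial_le_pow _ _)

end SetFamily

theorem Real.le_rpow_mul_of_pow_le {x a b m : ℝ} {s : ℕ} (hs : s ≠ 0) (hx : 0 ≤ x) (ha : 0 ≤ a)
    (hb : 0 ≤ b) (hm : 0 ≤ m) (h : x ^ s ≤ a * b ^ s * m ^ (s - 1)) :
    x ≤ a ^ (1 / s : ℝ) * b * m ^ (1 - 1 / s : ℝ) := by
  have hexp : ((s - 1 : ℕ) : ℝ) * (s : ℝ)⁻¹ = 1 - 1 / s := by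
    rw [Nat.cast_sub (Nat.one_le_iff_ne_zero.2 hs), Nat.cast_one]
    field_simp
  calc x = (x ^ s) ^ (s⁻¹ : ℝ) := (pow_rpow_inv_natCast hx hs).symm
    _ ≤ (a * b ^ s * m ^ (s - 1)) ^ (s⁻¹ : ℝ) := by gcongr
    _ = a ^ (1 / s : ℝ) * b * m ^ (1 - 1 / s : ℝ) := by
        rw [mul_rpow (by positivity) (by positivity), mul_rpow ha (by positivity),
          pow_rpow_inv_natCast hb hs, ← rpow_natCast m, ← rpow_mul hm, hexp, one_div]

section BipartiteGraph

variable [DecidableEq α] [DecidableEq β] {X : Finset α} {Y : Finset β} {G : Finset (α × β)}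

theorem Finset.card_eq_sum_card_bipartiteBelow (hG : G ⊆ X ×ˢ Y) :
    #G = ∑ y ∈ Y, #(X.bipartiteBelow (fun x y => (x, y) ∈ G) y) := by
  calc #G = #{p ∈ X ×ˢ Y | p ∈ G} := by rw [filter_mem_eq_inter, inter_eq_right.2 hG]
    _ = ∑ y ∈ Y, #(X.bipartiteBelow (fun x y => (x, y) ∈ G) y) := by
        rw [card_filter, sum_product_right]
        simp only [bipartiteBelow, card_filter]

theorem Finset.card_filter_subset_bipartiteBelow_lt {s t : ℕ}
    (hK : ¬ ∃ S : Finset α, S ⊆ X ∧ S.card = s ∧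
      ∃ T : Finset β, T ⊆ Y ∧ T.card = t ∧ ∀ x ∈ S, ∀ y ∈ T, (x, y) ∈ G)
    {S : Finset α} (hS : S ∈ X.powersetCard s) :
    #{y ∈ Y | S ⊆ X.bipartiteBelow (fun x y => (x, y) ∈ G) y} < t := by
  by_contra! htle
  obtain ⟨T, hTsub, hTcard⟩ := exists_subset_card_eq htle
  rw [mem_powersetCard] at hS
  refine hK ⟨S, hS.1, hS.2, T, hTsub.trans (filter_subset _ _), hTcard, fun x hx y hy => ?_⟩
  exact ((mem_bipartiteBelow _).1 ((mem_filter.1 (hTsub hy)).2 hx)).2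

end BipartiteGraph

/-- Kővári–Sós–Turán theorem, asymmetric bipartite form. -/
theorem kovari_sos_turan :
    ∃ C : ℝ, 0 < C ∧
      ∀ (α β : Type) (X : Finset α) (Y : Finset β) (G : Finset (α × β)),
        G ⊆ X ×ˢ Y →
        ∀ s t : ℕ, 0 < s → 0 < t →
        (¬ ∃ S : Finset α, S ⊆ X ∧ S.card = s ∧
            ∃ T : Finset β, T ⊆ Y ∧ T.card = t ∧
              ∀ x ∈ S, ∀ y ∈ T, (x, y) ∈ G) →
        (G.card : ℝ) ≤
          C * ((t : ℝ) ^ ((1 : ℝ) / s) * (X.card : ℝ) * (Y.card : ℝ) ^ (1 - (1 : ℝ) / s)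
                + (s : ℝ) * (Y.card : ℝ)) := by
  classical
  refine ⟨1, one_pos, fun α β X Y G hG s t hs _ hK => ?_⟩
  set N := fun y => X.bipartiteBelow (fun x y => (x, y) ∈ G) y
  set E := ∑ y ∈ Y, (#(N y) + 1 - s)
  have hcard : #G ≤ E + s * #Y := by
    calc #G = ∑ y ∈ Y, #(N y) := card_eq_sum_card_bipartiteBelow hG
      _ ≤ ∑ y ∈ Y, ((#(N y) + 1 - s) + s) := sum_le_sum fun y _ => by omega
      _ = E + s * #Y := by rw [sum_add_distrib, sum_const, smul_eq_mul, mul_comm]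
  have hpow : E ^ s ≤ t * #X ^ s * #Y ^ (s - 1) := by
    obtain ⟨k, rfl⟩ := Nat.exists_eq_succ_of_ne_zero hs.ne'
    calc E ^ (k + 1) ≤ #Y ^ k * ∑ y ∈ Y, (#(N y) + 1 - (k + 1)) ^ (k + 1) :=
          pow_sum_le_card_mul_sum_pow (fun _ _ => Nat.zero_le _) k
      _ ≤ #Y ^ k * (t * #X ^ (k + 1)) := Nat.mul_le_mul_left _ <|
          sum_card_add_one_sub_pow_le (fun _ _ => filter_subset _ _)
            fun S hS => (card_filter_subset_bipartiteBelow_lt hK hS).le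
      _ = t * #X ^ (k + 1) * #Y ^ (k + 1 - 1) := by rw [Nat.add_sub_cancel, mul_comm]
  have hE : (E : ℝ) ≤ (t : ℝ) ^ ((1 : ℝ) / s) * #X * (#Y : ℝ) ^ (1 - (1 : ℝ) / s) :=
    Real.le_rpow_mul_of_pow_le hs.ne' (Nat.cast_nonneg _) (Nat.cast_nonneg _) (Nat.cast_nonneg _)
      (Nat.cast_nonneg _) (by exact_mod_cast hpow)
  calc (#G : ℝ) ≤ E + s * #Y := by exact_mod_cast hcard
    _ ≤ 1 * ((t : ℝ) ^ ((1 : ℝ) / s) * #X * (#Y : ℝ) ^ (1 - (1 : ℝ) / s) + s * #Y) := by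
        linarith
end

section
/- Let (x,y) and (x',y') be two distinct points in ℂ². Then there are at most two pairs (a,b) ∈ ℂ × ℂ* such that both points lie on the curve C_{a,b} = {(z,w) ∈ ℂ² : (z-a)·(w - 1/b) = 1}. -/
/-- Two distinct points lie on at most two curves (z-a)(w-1/b)=1. -/
theorem two_curves_through_two_points (x y x' y' : ℂ) (h : (x, y) ≠ (x', y')) :
    ∃ p q : ℂ × ℂ,
      {ab : ℂ × ℂ | ab.2 ≠ 0 ∧ (x - ab.1) * (y - ab.2⁻¹) = 1 ∧
          (x' - ab.1) * (y' - ab.2⁻¹) = 1} ⊆ {p, q} := by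
  by_cases hx : x = x'
  · -- then y ≠ y', and the set is empty
    have hy : y ≠ y' := fun hy => h (by rw [hx, hy])
    refine ⟨(0, 0), (0, 0), fun ab ⟨hb, h1, h2⟩ => absurd ?_ hy⟩
    subst hx
    have hxa : x - ab.1 ≠ 0 := by
      intro hz; rw [hz, zero_mul] at h1; exact one_ne_zero h1.symm
    have hcc := mul_left_cancel₀ hxa (h1.trans h2.symm)
    linear_combination hcc
  · by_cases hy : y = y'
    · -- then the set is empty
      refine ⟨(0, 0), (0, 0), fun ab ⟨hb, h1, h2⟩ => absurd ?_ hx⟩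
      subst hy
      have hyc : y - ab.2⁻¹ ≠ 0 := by
        intro hz; rw [hz, mul_zero] at h1; exact one_ne_zero h1.symm
      have hcc := mul_right_cancel₀ hyc (h1.trans h2.symm)
      linear_combination hcc
    · have hxx : x - x' ≠ 0 := sub_ne_zero.mpr hx
      obtain ⟨s, hs⟩ := IsAlgClosed.exists_pow_nat_eq
        ((x - x') ^ 2 * (y + y') ^ 2 - 4 * (x - x') * ((x - x') * (y * y') - (y' - y)))
        (n := 2) (by norm_num)
      set r1 : ℂ := ((x - x') * (y + y') + s) / (2 * (x - x')) with hr1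
      set r2 : ℂ := ((x - x') * (y + y') - s) / (2 * (x - x')) with hr2
      refine ⟨(x - (y - r1)⁻¹, r1⁻¹), (x - (y - r2)⁻¹, r2⁻¹), ?_⟩
      rintro ⟨a, b⟩ ⟨hb, h1, h2⟩
      set c : ℂ := b⁻¹ with hc
      have hyc : y - c ≠ 0 := by
        intro hz; rw [hz, mul_zero] at h1; exact one_ne_zero h1.symm
      have key : (x - x') * ((y - c) * (y' - c)) = y' - y := by
        linear_combination (y' - c) * h1 - (y - c) * h2
      have h0 : (2 * (x - x') * c - ((x - x') * (y + y') + s)) *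
          (2 * (x - x') * c - ((x - x') * (y + y') - s)) = 0 := by
        linear_combination (4 * (x - x')) * key - hs
      have hb' : b = c⁻¹ := by rw [hc, inv_inv]
      have ha : a = x - (y - c)⁻¹ := by
        have : x - a = (y - c)⁻¹ := eq_inv_of_mul_eq_one_left (by linear_combination h1)
        linear_combination -this
      rcases mul_eq_zero.mp h0 with h0 | h0
      · have hcr : c = r1 := by
          rw [hr1, eq_div_iff (by simpa using hxx)]
          linear_combination h0
        left
        show (a, b) = _
        rw [Prod.ext_iff]
        exact ⟨by rw [ha, hcr], by rw [hb', hcr]⟩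
      · have hcr : c = r2 := by
          rw [hr2, eq_div_iff (by simpa using hxx)]
          linear_combination h0
        right
        show (a, b) = _
        rw [Prod.ext_iff]
        exact ⟨by rw [ha, hcr], by rw [hb', hcr]⟩
end

section
/- Let C₁ and C₂ be plane algebraic curves in ℂ² defined by nonzero polynomials f, g ∈ ℂ[x,y] with no common factor, where deg f = d₁ and deg g = d₂. Then |Z(f) ∩ Z(g)| ≤ d₁·d₂, i.e., the curves intersect in at most d₁·d₂ points. -/
/-!
Let `V_m` be the space of polynomials in two variables of total degree `≤ m`, of dimension
`(m + 2).choose 2`, and let `S` be a set of `N` common zeros of `f` and `g`, of degrees `d₁, d₂`.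
The map `(a, b) ↦ f a + g b : V_{d₂+N} × V_{d₁+N} → V_{d₁+d₂+N}` has kernel `{(g c, -f c)}`,
of dimension at most `dim V_N`, because `f` and `g` are coprime; its image consists of
polynomials vanishing on `S`, which has codimension `N` since polynomials of degree `< N`
already interpolate arbitrary values on `S`. Counting dimensions gives `N ≤ d₁ d₂`.
-/

open MvPolynomial Finset

theorem Set.finite_and_ncard_le_of_forall_finset_card_le {α : Type*} {s : Set α} {n : ℕ}
    (h : ∀ t : Finset α, ↑t ⊆ s → #t ≤ n) : s.Finite ∧ s.ncard ≤ n := by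
  have hs : s.Finite := by
    by_contra hinf
    obtain ⟨t, hts, ht⟩ := Set.Infinite.exists_subset_card_eq hinf (n + 1)
    have := h t hts
    omega
  refine ⟨hs, ?_⟩
  rw [Set.ncard_eq_toFinset_card s hs]
  exact h hs.toFinset (by simp)

theorem Nat.choose_two_add_choose_two_eq (a b k : ℕ) :
    (a + b + k + 2).choose 2 + (k + 2).choose 2 =
      (b + k + 2).choose 2 + (a + k + 2).choose 2 + a * b := by
  qify [Nat.cast_choose_two]
  ring

noncomputable section

namespace MvPolynomial

theorem finrank_restrictTotalDegree (σ K : Type*) [Fintype σ] [Field K] (m : ℕ) :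
    Module.finrank K (restrictTotalDegree σ K m) =
      (m + Fintype.card σ).choose (Fintype.card σ) := by
  classical
  have hmonomials : {d : σ →₀ ℕ | (d.sum fun _ e => e) ≤ m} =
      ↑((range (m + 1)).biUnion fun k => (univ : Finset σ).finsuppAntidiag k) := by
    ext d
    simp [Finsupp.sum_fintype]
  have hdisjoint : (↑(range (m + 1)) : Set ℕ).PairwiseDisjoint
      fun k => (univ : Finset σ).finsuppAntidiag k := by
    intro k _ l _ hkl
    simp only [disjoint_left, mem_finsuppAntidiag]
    rintro d ⟨rfl, -⟩ ⟨h, -⟩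
    exact hkl h
  rw [restrictTotalDegree, Module.finrank_eq_nat_card_basis (basisRestrictSupport K _),
    hmonomials, Nat.card_coe_set_eq, Set.ncard_coe_finset, card_biUnion hdisjoint]
  simp only [card_finsuppAntidiag_nat_eq_multichoose, card_univ, Nat.sum_range_multichoose]

section CommSemiring

variable {σ R : Type*} [CommSemiring R]

def mulLeftRestrictTotalDegree (f : MvPolynomial σ R) {m n : ℕ} (h : f.totalDegree + m ≤ n) :
    restrictTotalDegree σ R m →ₗ[R] restrictTotalDegree σ R n :=
  (LinearMap.mulLeft R f ∘ₗ (restrictTotalDegree σ R m).subtype).codRestrict _ fun a =>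
    (mem_restrictTotalDegree _ _ _).2 <| (totalDegree_mul _ _).trans <|
      le_trans (Nat.add_le_add_left ((mem_restrictTotalDegree _ _ _).1 a.2) _) h

@[simp]
theorem coe_mulLeftRestrictTotalDegree_apply (f : MvPolynomial σ R) {m n : ℕ}
    (h : f.totalDegree + m ≤ n) (a : restrictTotalDegree σ R m) :
    (mulLeftRestrictTotalDegree f h a : MvPolynomial σ R) = f * a :=
  rfl

def evalRestrictTotalDegree (S : Finset (σ → R)) (n : ℕ) :
    restrictTotalDegree σ R n →ₗ[R] (S → R) :=
  LinearMap.pi fun x => (aeval (x : σ → R)).toLinearMap ∘ₗ (restrictTotalDegree σ R n).subtype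

@[simp]
theorem evalRestrictTotalDegree_apply (S : Finset (σ → R)) (n : ℕ)
    (p : restrictTotalDegree σ R n) (x : S) :
    evalRestrictTotalDegree S n p x = eval (x : σ → R) (p : MvPolynomial σ R) :=
  rfl

end CommSemiring

section Field

variable {σ K : Type*} [Field K]

theorem exists_totalDegree_le_card_eval_ne_zero_of_notMem {x : σ → K} (T : Finset (σ → K))
    (hx : x ∉ T) :
    ∃ p : MvPolynomial σ K, p.totalDegree ≤ #T ∧ eval x p ≠ 0 ∧ ∀ y ∈ T, eval y p = 0 := by
  classical
  induction T using Finset.induction_on with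
  | empty => exact ⟨1, by simp, by simp, by simp⟩
  | insert y T hyT ih =>
    obtain ⟨p, hp_deg, hpx, hpT⟩ := ih fun h => hx (mem_insert_of_mem h)
    obtain ⟨i, hi⟩ := Function.ne_iff.1 (ne_of_mem_of_not_mem (mem_insert_self y T) hx).symm
    refine ⟨p * (X i - C (y i)), ?_, ?_, ?_⟩
    · rw [card_insert_of_notMem hyT]
      refine (totalDegree_mul _ _).trans (Nat.add_le_add hp_deg ?_)
      exact (totalDegree_sub_C_le _ _).trans (totalDegree_X i).le
    · simpa [sub_eq_zero] using ⟨hpx, hi⟩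
    · intro z hz
      rcases mem_insert.1 hz with rfl | hz
      · simp
      · simp [hpT z hz]

theorem evalRestrictTotalDegree_surjective (S : Finset (σ → K)) {n : ℕ} (hS : #S ≤ n + 1) :
    Function.Surjective (evalRestrictTotalDegree S n) := by
  classical
  rw [← LinearMap.range_eq_top, eq_top_iff, ← (Pi.basisFun K S).span_eq, Submodule.span_le]
  rintro _ ⟨x, rfl⟩
  obtain ⟨p, hp_deg, hpx, hpS⟩ :=
    exists_totalDegree_le_card_eval_ne_zero_of_notMem (S.erase x) (notMem_erase (x : σ → K) S)
  have hmem : (eval (x : σ → K) p)⁻¹ • p ∈ restrictTotalDegree σ K n := by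
    rw [mem_restrictTotalDegree]
    refine (totalDegree_smul_le _ _).trans (hp_deg.trans ?_)
    rw [card_erase_of_mem x.2]
    omega
  refine ⟨⟨_, hmem⟩, ?_⟩
  ext y
  rw [Pi.basisFun_apply]
  by_cases hyx : y = x
  · subst hyx
    simp [hpx]
  · have := hpS y (mem_erase.2 ⟨Subtype.coe_ne_coe.2 hyx, y.2⟩)
    simp [this, hyx]

variable (f g : MvPolynomial σ K) (k : ℕ)

def sylvesterMap :
    restrictTotalDegree σ K (g.totalDegree + k) × restrictTotalDegree σ K (f.totalDegree + k) →ₗ[K]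
      restrictTotalDegree σ K (f.totalDegree + g.totalDegree + k) :=
  mulLeftRestrictTotalDegree f (by omega) ∘ₗ LinearMap.fst K _ _ +
    mulLeftRestrictTotalDegree g (by omega) ∘ₗ LinearMap.snd K _ _

def koszulSyzygyMap :
    restrictTotalDegree σ K k →ₗ[K]
      restrictTotalDegree σ K (g.totalDegree + k) × restrictTotalDegree σ K (f.totalDegree + k) :=
  (mulLeftRestrictTotalDegree g le_rfl).prod (-mulLeftRestrictTotalDegree f le_rfl)

@[simp]
theorem coe_sylvesterMap_apply (a : restrictTotalDegree σ K (g.totalDegree + k))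
    (b : restrictTotalDegree σ K (f.totalDegree + k)) :
    (sylvesterMap f g k (a, b) : MvPolynomial σ K) = f * a + g * b :=
  rfl

variable {f g}

theorem ker_sylvesterMap_le_range_koszulSyzygyMap (hg : g ≠ 0) (hfg : IsRelPrime f g) :
    LinearMap.ker (sylvesterMap f g k) ≤ LinearMap.range (koszulSyzygyMap f g k) := by
  rintro ⟨a, b⟩ hker
  have hab : f * a + g * b = 0 := by
    simpa using congrArg Subtype.val (LinearMap.mem_ker.1 hker)
  obtain ⟨c, hc⟩ : g ∣ (a : MvPolynomial σ K) :=
    hfg.symm.dvd_of_dvd_mul_right ⟨-b, by linear_combination hab⟩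
  have hb : (b : MvPolynomial σ K) = -(f * c) :=
    mul_left_cancel₀ hg (by linear_combination hab - f * hc)
  have hc_deg : c.totalDegree ≤ k := by
    by_cases hc0 : c = 0
    · simp [hc0]
    · have ha := (mem_restrictTotalDegree _ _ _).1 a.2
      rw [hc, totalDegree_mul_of_isDomain hg hc0] at ha
      omega
  refine ⟨⟨c, (mem_restrictTotalDegree _ _ _).2 hc_deg⟩, ?_⟩
  ext
  · simp [koszulSyzygyMap, hc]
  · simp [koszulSyzygyMap, hb]

theorem range_sylvesterMap_le_ker_eval {S : Finset (σ → K)}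
    (hS : ∀ x ∈ S, eval x f = 0 ∧ eval x g = 0) :
    LinearMap.range (sylvesterMap f g k) ≤
      LinearMap.ker (evalRestrictTotalDegree S (f.totalDegree + g.totalDegree + k)) := by
  rintro _ ⟨⟨a, b⟩, rfl⟩
  ext x
  simp [(hS x x.2).1, (hS x x.2).2]

theorem card_add_finrank_le [Fintype σ] (hg : g ≠ 0) (hfg : IsRelPrime f g) {S : Finset (σ → K)}
    (hS : ∀ x ∈ S, eval x f = 0 ∧ eval x g = 0)
    (hk : #S ≤ f.totalDegree + g.totalDegree + k + 1) :
    #S + Module.finrank K (restrictTotalDegree σ K (g.totalDegree + k)) +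
        Module.finrank K (restrictTotalDegree σ K (f.totalDegree + k)) ≤
      Module.finrank K (restrictTotalDegree σ K (f.totalDegree + g.totalDegree + k)) +
        Module.finrank K (restrictTotalDegree σ K k) := by
  have hsylvester := LinearMap.finrank_range_add_finrank_ker (sylvesterMap f g k)
  have hker : Module.finrank K (LinearMap.ker (sylvesterMap f g k)) ≤
      Module.finrank K (restrictTotalDegree σ K k) :=
    (Submodule.finrank_mono (ker_sylvesterMap_le_range_koszulSyzygyMap k hg hfg)).trans
      (LinearMap.finrank_range_le _)
  have heval := LinearMap.finrank_range_add_finrank_ker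
    (evalRestrictTotalDegree S (f.totalDegree + g.totalDegree + k))
  have hrange := Submodule.finrank_mono (range_sylvesterMap_le_ker_eval k hS)
  rw [LinearMap.range_eq_top.2 (evalRestrictTotalDegree_surjective S hk), finrank_top,
    Module.finrank_fintype_fun_eq_card, Fintype.card_coe] at heval
  rw [Module.finrank_prod] at hsylvester
  omega

theorem card_le_totalDegree_mul_totalDegree {f g : MvPolynomial (Fin 2) K} (hg : g ≠ 0)
    (hfg : IsRelPrime f g) {S : Finset (Fin 2 → K)}
    (hS : ∀ x ∈ S, eval x f = 0 ∧ eval x g = 0) :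
    #S ≤ f.totalDegree * g.totalDegree := by
  have := card_add_finrank_le #S hg hfg hS (by omega)
  simp only [finrank_restrictTotalDegree, Fintype.card_fin] at this
  have := Nat.choose_two_add_choose_two_eq f.totalDegree g.totalDegree #S
  omega

end Field

end MvPolynomial

end

theorem bezout_inequality_general (f g : MvPolynomial (Fin 2) ℂ) (d₁ d₂ : ℕ)
    (hg : g ≠ 0)
    (hdf : f.totalDegree = d₁) (hdg : g.totalDegree = d₂)
    (hcop : ∀ h : MvPolynomial (Fin 2) ℂ, h ∣ f → h ∣ g → IsUnit h) :
    {p : ℂ × ℂ | MvPolynomial.eval ![p.1, p.2] f = 0 ∧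
        MvPolynomial.eval ![p.1, p.2] g = 0}.Finite ∧
    {p : ℂ × ℂ | MvPolynomial.eval ![p.1, p.2] f = 0 ∧
        MvPolynomial.eval ![p.1, p.2] g = 0}.ncard ≤ d₁ * d₂ := by
  subst hdf hdg
  refine Set.finite_and_ncard_le_of_forall_finset_card_le fun T hT => ?_
  have hS : ∀ x ∈ T.map (finTwoArrowEquiv ℂ).symm.toEmbedding, eval x f = 0 ∧ eval x g = 0 := by
    intro x hx
    obtain ⟨p, hp, rfl⟩ := mem_map.1 hx
    exact hT hp
  simpa using card_le_totalDegree_mul_totalDegree hg hcop hS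

/-- Bézout's inequality for affine plane curves over ℂ. -/
theorem bezout_inequality (f g : MvPolynomial (Fin 2) ℂ) (d₁ d₂ : ℕ)
    (hf : f ≠ 0) (hg : g ≠ 0)
    (hdf : f.totalDegree = d₁) (hdg : g.totalDegree = d₂)
    (hcop : ∀ h : MvPolynomial (Fin 2) ℂ, h ∣ f → h ∣ g → IsUnit h) :
    {p : ℂ × ℂ | MvPolynomial.eval ![p.1, p.2] f = 0 ∧
        MvPolynomial.eval ![p.1, p.2] g = 0}.Finite ∧
    {p : ℂ × ℂ | MvPolynomial.eval ![p.1, p.2] f = 0 ∧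
        MvPolynomial.eval ![p.1, p.2] g = 0}.ncard ≤ d₁ * d₂ :=
  bezout_inequality_general f g d₁ d₂ hg hdf hdg hcop
end

section
/- Let A₁, A₂ ⊆ ℝ² be finite sets with |A₁| ≤ |A₂|, let P = A₁ × A₂ ⊆ ℝ⁴, let S be a finite set of subsets of ℝ⁴, and let I ⊆ P × S be an incidence subgraph containing no K_{2,M}. Suppose ℝ⁴ is partitioned into cells such that each cell contains at most K points of P and each member of S meets at most T cells. Then |I| ≤ T·|S| + M·N·K², where N is the number of cells. -/
open scoped Classical

/-- Counting step of the cell-decomposition argument in ℝ⁴. -/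
theorem cell_decomposition_counting (A₁ A₂ : Finset (ℝ × ℝ))
    (h12 : A₁.card ≤ A₂.card)
    (S : Finset (Set ((ℝ × ℝ) × (ℝ × ℝ)))) (M K T N : ℕ)
    (I : Finset (((ℝ × ℝ) × (ℝ × ℝ)) × Set ((ℝ × ℝ) × (ℝ × ℝ))))
    (hI : I ⊆ (A₁ ×ˢ A₂) ×ˢ S)
    (hinc : ∀ ps ∈ I, ps.1 ∈ ps.2)
    (cells : Fin N → Set ((ℝ × ℝ) × (ℝ × ℝ)))
    (hdisj : ∀ i j : Fin N, i ≠ j → Disjoint (cells i) (cells j))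
    (hcover : (⋃ i, cells i) = Set.univ)
    (hK : ∀ i : Fin N, ((A₁ ×ˢ A₂).filter (· ∈ cells i)).card ≤ K)
    (hT : ∀ s ∈ S, (Finset.univ.filter (fun i : Fin N => (s ∩ cells i).Nonempty)).card ≤ T)
    (hKst : ∀ p ∈ A₁ ×ˢ A₂, ∀ q ∈ A₁ ×ˢ A₂, p ≠ q →
      (S.filter (fun s => (p, s) ∈ I ∧ (q, s) ∈ I)).card < M) :
    I.card ≤ T * S.card + M * N * K ^ 2 := by
  classical
  set P : Finset ((ℝ × ℝ) × (ℝ × ℝ)) := A₁ ×ˢ A₂ with hPdef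
  -- an index function assigning each point its (unique) cell
  have hex : ∀ x : (ℝ × ℝ) × (ℝ × ℝ), ∃ i, x ∈ cells i := by
    intro x
    have hx : x ∈ ⋃ i, cells i := by rw [hcover]; exact Set.mem_univ x
    simpa using hx
  choose idx hidx using hex
  have hidx_uniq : ∀ x (j : Fin N), x ∈ cells j → j = idx x := by
    intro x j hj
    by_contra hne
    exact Set.disjoint_left.mp (hdisj j (idx x) hne) hj (hidx x)
  -- split I according to whether the point is the unique incidence of s in its cell
  set good : (((ℝ × ℝ) × (ℝ × ℝ)) × Set ((ℝ × ℝ) × (ℝ × ℝ))) → Prop :=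
    fun ps => ∀ q ∈ P, (q, ps.2) ∈ I → idx q = idx ps.1 → q = ps.1 with hgood
  have hsplit : (I.filter good).card + (I.filter fun ps => ¬ good ps).card = I.card :=
    Finset.card_filter_add_card_filter_not (p := good)
  -- bound the "good" part
  have h1 : (I.filter good).card ≤ T * S.card := by
    set Tgt : Finset (Set ((ℝ × ℝ) × (ℝ × ℝ)) × Fin N) :=
      S.biUnion (fun s =>
        (Finset.univ.filter fun i : Fin N => (s ∩ cells i).Nonempty).image fun i => (s, i))
      with hTgt
    have hmap : ∀ ps ∈ I.filter good, (ps.2, idx ps.1) ∈ Tgt := by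
      intro ps hps
      have hpsI : ps ∈ I := (Finset.mem_filter.mp hps).1
      have hmem := hI hpsI
      rw [Finset.mem_product] at hmem
      refine Finset.mem_biUnion.mpr ⟨ps.2, hmem.2, ?_⟩
      refine Finset.mem_image.mpr ⟨idx ps.1, ?_, rfl⟩
      refine Finset.mem_filter.mpr ⟨Finset.mem_univ _, ⟨ps.1, hinc ps hpsI, hidx ps.1⟩⟩
    have hinj : ∀ a ∈ I.filter good, ∀ b ∈ I.filter good,
        (a.2, idx a.1) = (b.2, idx b.1) → a = b := by
      intro a ha b hb heq
      have haI : a ∈ I := (Finset.mem_filter.mp ha).1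
      have hbI : b ∈ I := (Finset.mem_filter.mp hb).1
      have hga : good a := (Finset.mem_filter.mp ha).2
      have h2 : a.2 = b.2 := congrArg Prod.fst heq
      have hidxeq : idx a.1 = idx b.1 := congrArg Prod.snd heq
      have hbP : b.1 ∈ P := by
        have := hI hbI; rw [Finset.mem_product] at this; exact this.1
      have hb1 : (b.1, a.2) ∈ I := by rw [h2]; exact (by simpa using hbI)
      have := hga b.1 hbP hb1 hidxeq.symm
      exact Prod.ext this.symm h2
    have hc : (I.filter good).card ≤ Tgt.card :=
      Finset.card_le_card_of_injOn _ hmap hinj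
    have hc2 : Tgt.card ≤ S.card * T := by
      refine le_trans (Finset.card_biUnion_le) ?_
      refine le_trans (Finset.sum_le_sum (g := fun _ => T) (fun s hs =>
        le_trans Finset.card_image_le (hT s hs))) ?_
      simp [Finset.sum_const, mul_comm]
    calc (I.filter good).card ≤ Tgt.card := hc
      _ ≤ S.card * T := hc2
      _ = T * S.card := mul_comm _ _
  -- bound the "bad" part
  have h2 : (I.filter fun ps => ¬ good ps).card ≤ M * N * K ^ 2 := by
    set B := I.filter fun ps => ¬ good ps with hB
    have hfib : B.card = ∑ i : Fin N, (B.filter fun ps => idx ps.1 = i).card :=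
      Finset.card_eq_sum_card_fiberwise (fun ps _ => Finset.mem_univ (idx ps.1))
    have hcell : ∀ i : Fin N, (B.filter fun ps => idx ps.1 = i).card ≤ K * (K * (M - 1)) := by
      intro i
      set Pi := P.filter (· ∈ cells i) with hPi
      set Bi := B.filter fun ps => idx ps.1 = i with hBi
      have hfib2 : Bi.card = ∑ p ∈ Pi, (Bi.filter fun ps => ps.1 = p).card := by
        refine Finset.card_eq_sum_card_fiberwise (fun ps hps => ?_)
        have hpsB : ps ∈ B := (Finset.mem_filter.mp hps).1
        have hpsI : ps ∈ I := (Finset.mem_filter.mp hpsB).1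
        have hidxi : idx ps.1 = i := (Finset.mem_filter.mp hps).2
        have hP1 : ps.1 ∈ P := by
          have := hI hpsI; rw [Finset.mem_product] at this; exact this.1
        refine Finset.mem_filter.mpr ⟨hP1, ?_⟩
        have := hidx ps.1
        rw [hidxi] at this
        exact this
      have hper : ∀ p ∈ Pi, (Bi.filter fun ps => ps.1 = p).card ≤ K * (M - 1) := by
        intro p hp
        have hpP : p ∈ P := (Finset.mem_filter.mp hp).1
        -- inject into the surfaces witnessing a second incidence in the cell
        set F := S.filter (fun s => (p, s) ∈ I ∧ ∃ q ∈ Pi, q ≠ p ∧ (q, s) ∈ I) with hF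
        have hstep : (Bi.filter fun ps => ps.1 = p).card ≤ F.card := by
          refine Finset.card_le_card_of_injOn (fun ps => ps.2) ?_ ?_
          · intro ps hps
            have h1' := Finset.mem_filter.mp hps
            have hpsBi := h1'.1
            have hps1 : ps.1 = p := h1'.2
            have h2' := Finset.mem_filter.mp hpsBi
            have hpsB := h2'.1
            have hidxi : idx ps.1 = i := h2'.2
            have h3' := Finset.mem_filter.mp hpsB
            have hpsI := h3'.1
            have hbad : ¬ good ps := h3'.2
            have hS : ps.2 ∈ S := by
              have := hI hpsI; rw [Finset.mem_product] at this; exact this.2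
            have hpI : (p, ps.2) ∈ I := by rw [← hps1]; simpa using hpsI
            simp only [hgood] at hbad
            push_neg at hbad
            obtain ⟨q, hqP, hqI, hqidx, hqne⟩ := hbad
            have hqPi : q ∈ Pi := by
              refine Finset.mem_filter.mpr ⟨hqP, ?_⟩
              have := hidx q
              rw [hqidx, hidxi] at this
              exact this
            refine Finset.mem_filter.mpr ⟨hS, hpI, q, hqPi, ?_, hqI⟩
            rw [hps1] at hqne
            exact hqne
          · intro a ha b hb heq
            have ha1 : a.1 = p := (Finset.mem_filter.mp ha).2
            have hb1 : b.1 = p := (Finset.mem_filter.mp hb).2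
            exact Prod.ext (ha1.trans hb1.symm) heq
        have hsub : F ⊆ (Pi.erase p).biUnion
            (fun q => S.filter (fun s => (p, s) ∈ I ∧ (q, s) ∈ I)) := by
          intro s hs
          have hm := Finset.mem_filter.mp hs
          obtain ⟨q, hqPi, hqne, hqI⟩ := hm.2.2
          refine Finset.mem_biUnion.mpr ⟨q, Finset.mem_erase.mpr ⟨hqne, hqPi⟩, ?_⟩
          exact Finset.mem_filter.mpr ⟨hm.1, hm.2.1, hqI⟩
        have hFle : F.card ≤ K * (M - 1) := by
          refine le_trans (Finset.card_le_card hsub) ?_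
          refine le_trans Finset.card_biUnion_le ?_
          have hbound : ∀ q ∈ Pi.erase p,
              (S.filter (fun s => (p, s) ∈ I ∧ (q, s) ∈ I)).card ≤ M - 1 := by
            intro q hq
            have hqne : q ≠ p := (Finset.mem_erase.mp hq).1
            have hqP : q ∈ P := (Finset.mem_filter.mp (Finset.mem_erase.mp hq).2).1
            have := hKst p hpP q hqP (fun h => hqne h.symm)
            omega
          refine le_trans (Finset.sum_le_sum hbound) ?_
          rw [Finset.sum_const, smul_eq_mul]
          have : (Pi.erase p).card ≤ K := le_trans (Finset.card_erase_le) (hK i)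
          exact Nat.mul_le_mul_right _ this
        exact le_trans hstep hFle
      calc Bi.card = ∑ p ∈ Pi, (Bi.filter fun ps => ps.1 = p).card := hfib2
        _ ≤ ∑ p ∈ Pi, K * (M - 1) := Finset.sum_le_sum hper
        _ = Pi.card * (K * (M - 1)) := by rw [Finset.sum_const, smul_eq_mul]
        _ ≤ K * (K * (M - 1)) := Nat.mul_le_mul_right _ (hK i)
    calc B.card = ∑ i : Fin N, (B.filter fun ps => idx ps.1 = i).card := hfib
      _ ≤ ∑ _i : Fin N, K * (K * (M - 1)) := Finset.sum_le_sum (fun i _ => hcell i)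
      _ = N * (K * (K * (M - 1))) := by simp [Finset.sum_const, mul_comm]
      _ ≤ M * N * K ^ 2 := by
        have h1 : M - 1 ≤ M := Nat.sub_le _ _
        calc N * (K * (K * (M - 1))) ≤ N * (K * (K * M)) := by
              exact Nat.mul_le_mul_left _ (Nat.mul_le_mul_left _ (Nat.mul_le_mul_left _ h1))
          _ = M * N * K ^ 2 := by ring
  omega
end
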